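/- arXiv:1712.02895 — 3 statements merged into one kernel-verified Lean document; each statement's English description precedes it below -/
import Mathlib

section
/- For all real x with 0 < x < 1, the function f(x) = (1 - x(1 - x/2))^{1/x} is strictly increasing in x. -/
/-!
Write `1 - x (1 - x/2) = (1 + (x - 1)²) / 2` and `h x = log (1 - x (1 - x/2))`, so that
`f = exp (h x / x)`. The derivative `h' x = 2u / (1 + u²)`, `u = x - 1`, is strictly increasing
for `u ∈ [-1, 1]`, so `h` is strictly convex on `[0, 2]`. Since `h 0 = 0`, `h x / x` is the slope
of the chord of `h` from the origin, which strictly increases with `x`.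
-/

open Real Set

theorem StrictConvexOn.strictMonoOn_div_self {𝕜 : Type*} [Field 𝕜] [LinearOrder 𝕜]
    [IsStrictOrderedRing 𝕜] {s : Set 𝕜} {f : 𝕜 → 𝕜} (hf : StrictConvexOn 𝕜 s f) (h0 : 0 ∈ s)
    (hf0 : f 0 = 0) : StrictMonoOn (fun x => f x / x) (s \ {0}) := by
  intro x hx y hy hxy
  simpa [hf0] using hf.secant_strict_mono h0 hx.1 hy.1 hx.2 hy.2 hxy

theorem one_sub_mul_one_sub_half_pos (x : ℝ) : 0 < 1 - x * (1 - x / 2) := by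
  nlinarith [sq_nonneg (x - 1)]

theorem hasDerivAt_log_one_sub_mul_one_sub_half (x : ℝ) :
    HasDerivAt (fun y => log (1 - y * (1 - y / 2))) ((x - 1) / (1 - x * (1 - x / 2))) x := by
  have hq : HasDerivAt (fun y : ℝ => 1 - y * (1 - y / 2)) (x - 1) x := by
    have := ((hasDerivAt_id' x).mul (((hasDerivAt_id' x).div_const 2).const_sub 1)).const_sub 1
    exact this.congr_deriv (by ring)
  exact hq.log (one_sub_mul_one_sub_half_pos x).ne'

theorem strictMonoOn_sub_one_div_one_sub_mul_one_sub_half :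
    StrictMonoOn (fun x : ℝ => (x - 1) / (1 - x * (1 - x / 2))) (Icc 0 2) := by
  intro x hx y hy hxy
  have hqx := one_sub_mul_one_sub_half_pos x
  have hqy := one_sub_mul_one_sub_half_pos y
  have hcross : (y - 1) * (1 - x * (1 - x / 2)) - (x - 1) * (1 - y * (1 - y / 2))
      = (y - x) * (1 - (x - 1) * (y - 1)) / 2 := by ring
  have huv : (x - 1) * (y - 1) < 1 := by nlinarith [hx.1, hy.2]
  rw [div_lt_div_iff₀ hqx hqy]
  nlinarith

theorem strictConvexOn_log_one_sub_mul_one_sub_half :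
    StrictConvexOn ℝ (Icc 0 2) (fun x : ℝ => log (1 - x * (1 - x / 2))) := by
  have hderiv : deriv (fun x : ℝ => log (1 - x * (1 - x / 2)))
      = fun x => (x - 1) / (1 - x * (1 - x / 2)) :=
    funext fun x => (hasDerivAt_log_one_sub_mul_one_sub_half x).deriv
  refine StrictMonoOn.strictConvexOn_of_deriv (convex_Icc 0 2)
    (fun x _ => (hasDerivAt_log_one_sub_mul_one_sub_half x).continuousAt.continuousWithinAt) ?_
  rw [hderiv]
  exact strictMonoOn_sub_one_div_one_sub_mul_one_sub_half.mono interior_subset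

/-- The function `f(x) = (1 - x(1 - x/2))^(1/x)` is strictly increasing on `(0,1)`. -/
theorem f_strictMonoOn :
    StrictMonoOn (fun x : ℝ => (1 - x * (1 - x / 2)) ^ (1 / x)) (Set.Ioo 0 1) := by
  have hslope := strictConvexOn_log_one_sub_mul_one_sub_half.strictMonoOn_div_self
    (by norm_num) (by norm_num)
  have hsub : Ioo (0 : ℝ) 1 ⊆ Icc 0 2 \ {0} := fun x hx =>
    ⟨⟨hx.1.le, by linarith [hx.2]⟩, hx.1.ne'⟩
  have hexp : EqOn (fun x : ℝ => (1 - x * (1 - x / 2)) ^ (1 / x))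
      (fun x => exp (log (1 - x * (1 - x / 2)) / x)) (Ioo 0 1) := fun x _ => by
    simp only [rpow_def_of_pos (one_sub_mul_one_sub_half_pos x), mul_one_div]
  exact (exp_strictMono.comp_strictMonoOn (hslope.mono hsub)).congr hexp.symm
end

section
/- For any positive integers k ≤ m, repetition number r ≥ 1, and δ ∈ (0,1] with mδ an integer, writing mδ/k = ⌊mδ/k⌋ + t/k with integer remainder t, the interpolation protocol worst-case error probability under p_k = k/m, namely [1 - (k/m)(1 - (k-1)/(2m))]^{⌊mδ/k⌋ r} · [1 - (t/m)(1 - (t-1)/(2m))]^r, is at most 2^{-δr}. -/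
/-!
With `x = j / m ∈ [0, 1]`, the failure probability of a block of size `j` is at most
`1 - x + x² / 2 ≤ 1 / (1 + x) ≤ 2 ^ (-x)`, the last step being Bernoulli's inequality
`2 ^ x ≤ 1 + x`. The `⌊mδ/k⌋ r` full blocks and the `r` remainder blocks therefore
contribute at most `2 ^ (-(k ⌊mδ/k⌋ + t) r / m) = 2 ^ (-δ r)`.
-/

open Real

noncomputable def blockErrorProb (m j : ℕ) : ℝ :=
  1 - ((j : ℝ) / m) * (1 - ((j : ℝ) - 1) / (2 * m))

lemma two_rpow_le_one_add {x : ℝ} (hx0 : 0 ≤ x) (hx1 : x ≤ 1) : (2 : ℝ) ^ x ≤ 1 + x := by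
  simpa [one_add_one_eq_two, mul_one] using
    rpow_one_add_le_one_add_mul_self (s := 1) (by norm_num) hx0 hx1

lemma one_sub_add_sq_div_two_le_inv_one_add {x : ℝ} (hx0 : 0 ≤ x) (hx1 : x ≤ 1) :
    1 - x + x ^ 2 / 2 ≤ (1 + x)⁻¹ := by
  rw [inv_eq_one_div, le_div_iff₀ (by linarith)]
  nlinarith [mul_nonneg (sq_nonneg x) (sub_nonneg.2 hx1)]

lemma one_sub_add_sq_div_two_le_two_rpow_neg {x : ℝ} (hx0 : 0 ≤ x) (hx1 : x ≤ 1) :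
    1 - x + x ^ 2 / 2 ≤ (2 : ℝ) ^ (-x) :=
  calc 1 - x + x ^ 2 / 2 ≤ (1 + x)⁻¹ := one_sub_add_sq_div_two_le_inv_one_add hx0 hx1
    _ ≤ ((2 : ℝ) ^ x)⁻¹ := inv_anti₀ (by positivity) (two_rpow_le_one_add hx0 hx1)
    _ = (2 : ℝ) ^ (-x) := (rpow_neg zero_le_two x).symm

section blockErrorProb

variable {m j : ℕ}

lemma blockErrorProb_eq (m j : ℕ) :
    blockErrorProb m j = 1 - (j : ℝ) / m + (j * ((j : ℝ) - 1)) / (2 * m ^ 2) := by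
  rcases Nat.eq_zero_or_pos m with rfl | hm
  · simp [blockErrorProb]
  · unfold blockErrorProb
    field_simp
    ring

lemma one_sub_div_le_blockErrorProb (m j : ℕ) : 1 - (j : ℝ) / m ≤ blockErrorProb m j := by
  rw [blockErrorProb_eq]
  have : (0 : ℝ) ≤ j * ((j : ℝ) - 1) := by
    rcases Nat.eq_zero_or_pos j with rfl | hj
    · simp
    · exact mul_nonneg j.cast_nonneg (sub_nonneg.2 (by exact_mod_cast hj))
  linarith [div_nonneg this (by positivity : (0 : ℝ) ≤ 2 * m ^ 2)]

lemma blockErrorProb_le (m j : ℕ) :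
    blockErrorProb m j ≤ 1 - (j : ℝ) / m + ((j : ℝ) / m) ^ 2 / 2 := by
  rw [blockErrorProb_eq, div_pow, div_div, mul_comm ((m : ℝ) ^ 2)]
  have : (j : ℝ) * ((j : ℝ) - 1) ≤ (j : ℝ) ^ 2 := by nlinarith [j.cast_nonneg (α := ℝ)]
  linarith [div_le_div_of_nonneg_right this (by positivity : (0 : ℝ) ≤ 2 * m ^ 2)]

lemma blockErrorProb_nonneg (hj : j ≤ m) : 0 ≤ blockErrorProb m j :=
  (sub_nonneg.2 (div_le_one_of_le₀ (by exact_mod_cast hj) m.cast_nonneg)).trans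
    (one_sub_div_le_blockErrorProb m j)

lemma blockErrorProb_pow_le (hj : j ≤ m) (n : ℕ) :
    blockErrorProb m j ^ n ≤ (2 : ℝ) ^ (-((j : ℝ) / m * n)) := by
  have hx1 : (j : ℝ) / m ≤ 1 := div_le_one_of_le₀ (by exact_mod_cast hj) m.cast_nonneg
  rw [neg_mul_eq_neg_mul, rpow_mul_natCast zero_le_two]
  gcongr
  · exact blockErrorProb_nonneg hj
  · exact (blockErrorProb_le m j).trans
      (one_sub_add_sq_div_two_le_two_rpow_neg (by positivity) hx1)

end blockErrorProb

theorem interpolation_error_bound_general (m k r : ℕ) (hk : 1 ≤ k) (hkm : k ≤ m)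
    (δ : ℝ) (D : ℕ) (hD : (D : ℝ) = (m : ℝ) * δ) :
    (1 - ((k : ℝ) / m) * (1 - ((k : ℝ) - 1) / (2 * m))) ^ ((D / k) * r) *
        (1 - (((D % k : ℕ) : ℝ) / m) * (1 - (((D % k : ℕ) : ℝ) - 1) / (2 * m))) ^ r
      ≤ (2 : ℝ) ^ (-(δ * r)) := by
  have hm : (m : ℝ) ≠ 0 := by norm_cast; omega
  have htm : D % k ≤ m := (Nat.mod_lt D hk).le.trans hkm
  have hdiv : (k : ℝ) * (D / k : ℕ) + (D % k : ℕ) = m * δ := by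
    rw [← hD]; exact_mod_cast Nat.div_add_mod D k
  calc blockErrorProb m k ^ ((D / k) * r) * blockErrorProb m (D % k) ^ r
      ≤ (2 : ℝ) ^ (-((k : ℝ) / m * ((D / k) * r : ℕ))) *
          (2 : ℝ) ^ (-(((D % k : ℕ) : ℝ) / m * r)) :=
        mul_le_mul (blockErrorProb_pow_le hkm _) (blockErrorProb_pow_le htm r)
          (pow_nonneg (blockErrorProb_nonneg htm) r) (by positivity)
    _ = (2 : ℝ) ^ (-(δ * r)) := by
        rw [← rpow_add zero_lt_two]
        congr 1
        field_simp
        push_cast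
        linear_combination (-r : ℝ) * hdiv

/-- Worst-case error probability of the interpolation protocol with block size `k`,
repetition number `r`, and `p_k = k/m` is at most `2^{-δ r}`.  Here `D = mδ ∈ ℕ`,
`⌊mδ/k⌋ = D / k` and remainder `t = D % k`. -/
theorem interpolation_error_bound (m k r : ℕ) (hk : 1 ≤ k) (hkm : k ≤ m) (hr : 1 ≤ r)
    (δ : ℝ) (hδ0 : 0 < δ) (hδ1 : δ ≤ 1) (D : ℕ) (hD : (D : ℝ) = (m : ℝ) * δ) :
    (1 - ((k : ℝ) / m) * (1 - ((k : ℝ) - 1) / (2 * m))) ^ ((D / k) * r) *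
        (1 - (((D % k : ℕ) : ℝ) / m) * (1 - (((D % k : ℕ) : ℝ) - 1) / (2 * m))) ^ r
      ≤ (2 : ℝ) ^ (-(δ * r)) :=
  interpolation_error_bound_general m k r hk hkm δ D hD
end

section
/- Let |ψ_x⟩ and |ψ_y⟩ be unit vectors in a Hilbert space and let Π be the orthogonal projection onto a subspace containing both |ψ_x⟩⊗|ψ_x⟩ and |ψ_y⟩⊗|ψ_y⟩. Then ⟨ψ_x ψ_y| Π |ψ_x ψ_y⟩ ≥ 2|⟨ψ_x|ψ_y⟩|²/(1 + |⟨ψ_x|ψ_y⟩|²) ≥ |⟨ψ_x|ψ_y⟩|². -/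
open scoped InnerProductSpace ComplexConjugate

/-!
Write `c = ⟪ψx, ψy⟫`. The vector `w = c |ψx ψx⟩ + c̄ |ψy ψy⟩` is fixed by `Π`, has
`‖w‖² = 2|c|²(1 + |c|²)` and `⟪w, ψx ψy⟫ = 2|c|²`. Since `⟪w, φ⟫ = ⟪w, Πφ⟫` for a
self-adjoint projection, Cauchy–Schwarz gives `4|c|⁴ ≤ ‖w‖² ‖Πφ‖² = ‖w‖² ⟪φ, Πφ⟫` with
`φ = |ψx ψy⟩`. The other inequality is `s ≤ 2s/(1+s)` for `s = |c|² ∈ [0, 1]`.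
-/

section Projection

variable {𝕜 E : Type*} [RCLike 𝕜] [NormedAddCommGroup E] [InnerProductSpace 𝕜 E]
  {P : E →ₗ[𝕜] E}

theorem LinearMap.IsSymmetric.re_inner_map_self_eq_norm_sq_of_isIdempotentElem
    (hP : P.IsSymmetric) (hidem : IsIdempotentElem P) (φ : E) :
    RCLike.re ⟪φ, P φ⟫_𝕜 = ‖P φ‖ ^ 2 := by
  rw [← inner_self_eq_norm_sq (𝕜 := 𝕜), hP, ← Module.End.mul_apply, hidem.eq]

theorem LinearMap.IsSymmetric.norm_inner_sq_le_of_map_eq_self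
    (hP : P.IsSymmetric) (hidem : IsIdempotentElem P) {w : E} (hw : P w = w) (φ : E) :
    ‖⟪w, φ⟫_𝕜‖ ^ 2 ≤ ‖w‖ ^ 2 * RCLike.re ⟪φ, P φ⟫_𝕜 := by
  have hCS : ‖⟪w, φ⟫_𝕜‖ ≤ ‖w‖ * ‖P φ‖ := by
    rw [← hw, hP, hw]
    exact norm_inner_le_norm w (P φ)
  rw [hP.re_inner_map_self_eq_norm_sq_of_isIdempotentElem hidem, ← mul_pow]
  gcongr

end Projection

theorem le_two_mul_div_one_add {s : ℝ} (h0 : 0 ≤ s) (h1 : s ≤ 1) : s ≤ 2 * s / (1 + s) := by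
  rw [le_div_iff₀ (by positivity)]
  nlinarith

section Tensor

variable {𝕜 H H2 : Type*} [RCLike 𝕜] [NormedAddCommGroup H] [InnerProductSpace 𝕜 H]
  [NormedAddCommGroup H2] [InnerProductSpace 𝕜 H2]
  {t : H →ₗ[𝕜] H →ₗ[𝕜] H2} {x y : H}

theorem inner_diagCombination_tensor (ht : ∀ a b c d : H, ⟪t a b, t c d⟫_𝕜 = ⟪a, c⟫_𝕜 * ⟪b, d⟫_𝕜)
    (hx : ‖x‖ = 1) (hy : ‖y‖ = 1) :
    ⟪⟪x, y⟫_𝕜 • t x x + conj ⟪x, y⟫_𝕜 • t y y, t x y⟫_𝕜 = 2 * (‖⟪x, y⟫_𝕜‖ : 𝕜) ^ 2 := by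
  have hyx : ⟪y, x⟫_𝕜 = conj ⟪x, y⟫_𝕜 := (inner_conj_symm y x).symm
  simp only [inner_add_left, inner_smul_left, ht, inner_self_eq_one_of_norm_eq_one hx,
    inner_self_eq_one_of_norm_eq_one hy, hyx, RCLike.conj_conj]
  linear_combination 2 * RCLike.mul_conj ⟪x, y⟫_𝕜

theorem norm_sq_diagCombination (ht : ∀ a b c d : H, ⟪t a b, t c d⟫_𝕜 = ⟪a, c⟫_𝕜 * ⟪b, d⟫_𝕜)
    (hx : ‖x‖ = 1) (hy : ‖y‖ = 1) :
    ‖⟪x, y⟫_𝕜 • t x x + conj ⟪x, y⟫_𝕜 • t y y‖ ^ 2 =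
      2 * ‖⟪x, y⟫_𝕜‖ ^ 2 * (1 + ‖⟪x, y⟫_𝕜‖ ^ 2) := by
  have hyx : ⟪y, x⟫_𝕜 = conj ⟪x, y⟫_𝕜 := (inner_conj_symm y x).symm
  apply RCLike.ofReal_injective (K := 𝕜)
  push_cast
  rw [← inner_self_eq_norm_sq_to_K]
  simp only [inner_add_left, inner_add_right, inner_smul_left, inner_smul_right, ht,
    inner_self_eq_one_of_norm_eq_one hx, inner_self_eq_one_of_norm_eq_one hy, hyx,
    RCLike.conj_conj]
  linear_combination
    (2 * conj ⟪x, y⟫_𝕜 * ⟪x, y⟫_𝕜 + 2 * (‖⟪x, y⟫_𝕜‖ : 𝕜) ^ 2 + 2) * RCLike.conj_mul ⟪x, y⟫_𝕜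

theorem two_mul_norm_inner_sq_div_le_re_inner_tensor
    (ht : ∀ a b c d : H, ⟪t a b, t c d⟫_𝕜 = ⟪a, c⟫_𝕜 * ⟪b, d⟫_𝕜) (hx : ‖x‖ = 1) (hy : ‖y‖ = 1)
    {P : H2 →ₗ[𝕜] H2} (hP : P.IsSymmetric) (hidem : IsIdempotentElem P)
    (hPx : P (t x x) = t x x) (hPy : P (t y y) = t y y) :
    2 * ‖⟪x, y⟫_𝕜‖ ^ 2 / (1 + ‖⟪x, y⟫_𝕜‖ ^ 2) ≤ RCLike.re ⟪t x y, P (t x y)⟫_𝕜 := by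
  have hPw : P (⟪x, y⟫_𝕜 • t x x + conj ⟪x, y⟫_𝕜 • t y y) =
      ⟪x, y⟫_𝕜 • t x x + conj ⟪x, y⟫_𝕜 • t y y := by
    rw [map_add, map_smul, map_smul, hPx, hPy]
  have key := hP.norm_inner_sq_le_of_map_eq_self hidem hPw (t x y)
  rw [inner_diagCombination_tensor ht hx hy, norm_sq_diagCombination ht hx hy] at key
  have hp : 0 ≤ RCLike.re ⟪t x y, P (t x y)⟫_𝕜 := by
    rw [hP.re_inner_map_self_eq_norm_sq_of_isIdempotentElem hidem]
    positivity
  have hnorm : ‖2 * (‖⟪x, y⟫_𝕜‖ : 𝕜) ^ 2‖ = 2 * ‖⟪x, y⟫_𝕜‖ ^ 2 := by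
    rw [norm_mul, norm_pow, RCLike.norm_ofReal, abs_norm, RCLike.norm_two]
  rw [hnorm] at key
  rw [div_le_iff₀ (by positivity)]
  rcases (sq_nonneg ‖⟪x, y⟫_𝕜‖).eq_or_lt with h0 | hpos
  · rw [← h0]
    linarith
  · nlinarith

end Tensor

/-- If `Π` is an orthogonal projection (self-adjoint idempotent) fixing both
`|ψ_x ψ_x⟩` and `|ψ_y ψ_y⟩` (tensor products encoded by a bilinear map `t`
satisfying `⟪t a b, t c d⟫ = ⟪a,c⟫⟪b,d⟫`), then
`⟨ψ_x ψ_y|Π|ψ_x ψ_y⟩ ≥ 2|⟨ψ_x|ψ_y⟩|²/(1+|⟨ψ_x|ψ_y⟩|²) ≥ |⟨ψ_x|ψ_y⟩|²`. -/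
theorem projection_overlap_lower_bound
    {H H2 : Type*} [NormedAddCommGroup H] [InnerProductSpace ℂ H]
    [NormedAddCommGroup H2] [InnerProductSpace ℂ H2]
    (t : H →ₗ[ℂ] H →ₗ[ℂ] H2)
    (ht : ∀ a b c d : H, ⟪t a b, t c d⟫_ℂ = ⟪a, c⟫_ℂ * ⟪b, d⟫_ℂ)
    (ψx ψy : H) (hx : ‖ψx‖ = 1) (hy : ‖ψy‖ = 1)
    (P : H2 →ₗ[ℂ] H2)
    (hsa : ∀ u v : H2, ⟪P u, v⟫_ℂ = ⟪u, P v⟫_ℂ)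
    (hidem : P ∘ₗ P = P)
    (hxx : P (t ψx ψx) = t ψx ψx)
    (hyy : P (t ψy ψy) = t ψy ψy) :
    ‖⟪ψx, ψy⟫_ℂ‖ ^ 2 ≤
        2 * ‖⟪ψx, ψy⟫_ℂ‖ ^ 2 / (1 + ‖⟪ψx, ψy⟫_ℂ‖ ^ 2) ∧
      2 * ‖⟪ψx, ψy⟫_ℂ‖ ^ 2 / (1 + ‖⟪ψx, ψy⟫_ℂ‖ ^ 2) ≤
        (⟪t ψx ψy, P (t ψx ψy)⟫_ℂ).re := by
  have hle : ‖⟪ψx, ψy⟫_ℂ‖ ≤ 1 := by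
    simpa [hx, hy] using norm_inner_le_norm (𝕜 := ℂ) ψx ψy
  exact ⟨le_two_mul_div_one_add (sq_nonneg _) (pow_le_one₀ (norm_nonneg _) hle),
    two_mul_norm_inner_sq_div_le_re_inner_tensor ht hx hy hsa hidem hxx hyy⟩
end
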